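/- arXiv:1603.07046 — 6 statements merged into one kernel-verified Lean document; each statement's English description precedes it below -/
import Mathlib

section
/- Let s, t ∈ {0,1,2,3} and let f : {0,1}² → ℂ satisfy f(0,0) = 1, f(0,1) = 𝔦^s, and f(1,0) = 𝔦^t. Then f is affine if and only if f(1,1) = 𝔦^{s+t} or f(1,1) = −𝔦^{s+t}. -/
/-- `𝔦^r` for `r ∈ ℤ₄`; well defined since `𝔦⁴ = 1`. -/
noncomputable def iPow (r : ZMod 4) : ℂ := Complex.I ^ r.val

/-- View `0, 1 ∈ ℤ₂` as elements of `ℤ₄`. -/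
def z2z4 (a : ZMod 2) : ZMod 4 := (a.val : ZMod 4)

/-- Evaluation at a `{0,1}`-point of the multilinear polynomial over `ℤ₄` whose
coefficient on the monomial `∏_{i ∈ S} xᵢ` is `c S`. -/
def evalML4 {ι : Type*} [Fintype ι] [DecidableEq ι]
    (c : Finset ι → ZMod 4) (x : ι → ZMod 2) : ZMod 4 :=
  ∑ S : Finset ι, c S * ∏ i ∈ S, z2z4 (x i)

/-- `x` extended by a final coordinate `1` (at `none`). -/
def extend1 {ι : Type*} (x : ι → ZMod 2) : Option ι → ZMod 2 := fun o => o.elim 1 x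

/-- A signature is affine if it is `λ · χ_{A(x,1)ᵀ = 0} · 𝔦^{Q(x)}` for a matrix `A`
over `ℤ₂` and a multilinear polynomial `Q` over `ℤ₄` of total degree at most 2
whose cross terms all have even coefficients. -/
def IsAffine {ι : Type*} [Fintype ι] [DecidableEq ι] (f : (ι → ZMod 2) → ℂ) : Prop :=
  ∃ (lam : ℂ) (m : ℕ) (A : Matrix (Fin m) (Option ι) (ZMod 2))
    (c : Finset ι → ZMod 4),
    (∀ S : Finset ι, 2 < S.card → c S = 0) ∧
    (∀ S : Finset ι, S.card = 2 → ∃ t : ZMod 4, c S = 2 * t) ∧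
    ∀ x : ι → ZMod 2,
      f x = lam * (if A.mulVec (extend1 x) = 0 then 1 else 0) * iPow (evalML4 c x)

lemma I_pow_mod (n : ℕ) : Complex.I ^ (n % 4) = Complex.I ^ n := by
  conv_rhs => rw [← Nat.div_add_mod n 4]
  rw [pow_add, pow_mul, Complex.I_pow_four, one_pow, one_mul]

lemma iPow_natCast (n : ℕ) : iPow (n : ZMod 4) = Complex.I ^ n := by
  rw [iPow, ZMod.val_natCast, I_pow_mod]

lemma iPow_add (a b : ZMod 4) : iPow (a + b) = iPow a * iPow b := by
  rw [iPow, ZMod.val_add, I_pow_mod, pow_add]; rfl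

lemma iPow_zero : iPow 0 = 1 := by simp [iPow]

lemma iPow_two_mul (u : ZMod 4) : iPow (2 * u) = 1 ∨ iPow (2 * u) = -1 := by
  have h : (2 * u).val = 0 ∨ (2 * u).val = 2 := by revert u; decide
  rcases h with h | h <;> rw [iPow, h] <;> norm_num

lemma z2z4_zero : z2z4 0 = 0 := rfl
lemma z2z4_one : z2z4 1 = 1 := rfl

lemma evalML4_fin2 (c : Finset (Fin 2) → ZMod 4) (x : Fin 2 → ZMod 2) :
    evalML4 c x = c ∅ + c {0} * z2z4 (x 0) + c {1} * z2z4 (x 1)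
      + c {0,1} * (z2z4 (x 0) * z2z4 (x 1)) := by
  have huniv : (Finset.univ : Finset (Finset (Fin 2))) = {∅, {0}, {1}, {0,1}} := by decide
  rw [evalML4, huniv]
  rw [Finset.sum_insert (by decide), Finset.sum_insert (by decide),
      Finset.sum_insert (by decide), Finset.sum_singleton]
  rw [Finset.prod_empty, Finset.prod_singleton, Finset.prod_singleton,
      Finset.prod_insert (by decide), Finset.prod_singleton]
  ring

lemma enum_fin2 (x : Fin 2 → ZMod 2) :
    x = ![0,0] ∨ x = ![0,1] ∨ x = ![1,0] ∨ x = ![1,1] := by revert x; decide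

lemma isAffine_of (a b e : ZMod 4) (f : (Fin 2 → ZMod 2) → ℂ)
    (h00 : f ![0,0] = 1) (h01 : f ![0,1] = iPow a) (h10 : f ![1,0] = iPow b)
    (h11 : f ![1,1] = iPow (a + b + 2 * e)) : IsAffine f := by
  classical
  set cc : Finset (Fin 2) → ZMod 4 :=
    fun S => if S = ∅ then 0 else if S = {0} then b else if S = {1} then a else 2 * e with hcc
  have hc0 : cc ∅ = 0 := by simp [hcc]
  have hc1 : cc {0} = b := by simp [hcc]
  have hc2 : cc {1} = a := by simp [hcc]
  have hc3 : cc {0,1} = 2 * e := by simp [hcc]; intro h; exact absurd h (by decide)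
  refine ⟨1, 0, 0, cc, ?_, ?_, ?_⟩
  · intro S hS
    have : S.card ≤ 2 := by
      have := Finset.card_le_univ S
      simpa using this
    omega
  · intro S hS
    have hSeq : S = {0, 1} := by
      have hu : S = Finset.univ := Finset.eq_univ_of_card S (by simpa using hS)
      rw [hu]; decide
    exact ⟨e, by rw [hSeq, hc3]⟩
  · intro x
    have hchi : (0 : Matrix (Fin 0) (Option (Fin 2)) (ZMod 2)).mulVec (extend1 x) = 0 :=
      Subsingleton.elim _ _
    rw [if_pos hchi, one_mul, one_mul]
    rcases enum_fin2 x with h | h | h | h <;> subst h <;>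
      rw [evalML4_fin2] <;>
      simp only [Matrix.cons_val_zero, Matrix.cons_val_one, Matrix.head_cons,
        z2z4_zero, z2z4_one, hc0, hc1, hc2, hc3]
    · rw [h00, show (0 + b * 0 + a * 0 + 2 * e * (0 * 0) : ZMod 4) = 0 by ring, iPow_zero]
    · rw [h01]; congr 1; ring
    · rw [h10]; congr 1; ring
    · rw [h11]; congr 1; ring

theorem binary_affine_iff (s t : ℕ) (hs : s < 4) (ht : t < 4)
    (f : (Fin 2 → ZMod 2) → ℂ)
    (h00 : f ![0, 0] = 1) (h01 : f ![0, 1] = Complex.I ^ s)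
    (h10 : f ![1, 0] = Complex.I ^ t) :
    IsAffine f ↔
      (f ![1, 1] = Complex.I ^ (s + t) ∨ f ![1, 1] = -Complex.I ^ (s + t)) := by
  constructor
  · rintro ⟨lam, m, A, c, -, hcross, hrep⟩
    have key : ∀ x, f x ≠ 0 →
        A.mulVec (extend1 x) = 0 ∧ f x = lam * iPow (evalML4 c x) := by
      intro x hx
      by_cases h : A.mulVec (extend1 x) = 0
      · exact ⟨h, by rw [hrep x, if_pos h, mul_one]⟩
      · exact absurd (by rw [hrep x, if_neg h]; ring) hx
    obtain ⟨hA00, he00⟩ := key ![0,0] (by rw [h00]; exact one_ne_zero)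
    obtain ⟨hA01, he01⟩ := key ![0,1] (by rw [h01]; exact pow_ne_zero _ Complex.I_ne_zero)
    obtain ⟨hA10, he10⟩ := key ![1,0] (by rw [h10]; exact pow_ne_zero _ Complex.I_ne_zero)
    have hA11 : A.mulVec (extend1 ![1,1]) = 0 := by
      have hext : extend1 (![(1:ZMod 2),1]) =
          extend1 ![0,1] + extend1 ![1,0] + extend1 ![0,0] := by decide
      rw [hext, Matrix.mulVec_add, Matrix.mulVec_add, hA00, hA01, hA10]
      simp
    have he11 : f ![1,1] = lam * iPow (evalML4 c ![1,1]) := by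
      rw [hrep ![1,1], if_pos hA11, mul_one]
    obtain ⟨u, hu⟩ := hcross {0,1} (by decide)
    have e00 : evalML4 c ![0,0] = c ∅ := by
      rw [evalML4_fin2]
      simp only [Matrix.cons_val_zero, Matrix.cons_val_one, Matrix.head_cons,
        z2z4_zero, z2z4_one]
      ring
    have e01 : evalML4 c ![0,1] = c ∅ + c {1} := by
      rw [evalML4_fin2]
      simp only [Matrix.cons_val_zero, Matrix.cons_val_one, Matrix.head_cons,
        z2z4_zero, z2z4_one]
      ring
    have e10 : evalML4 c ![1,0] = c ∅ + c {0} := by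
      rw [evalML4_fin2]
      simp only [Matrix.cons_val_zero, Matrix.cons_val_one, Matrix.head_cons,
        z2z4_zero, z2z4_one]
      ring
    have e11 : evalML4 c ![1,1] = c ∅ + c {0} + c {1} + 2 * u := by
      rw [evalML4_fin2, hu]
      simp only [Matrix.cons_val_zero, Matrix.cons_val_one, Matrix.head_cons,
        z2z4_zero, z2z4_one]
      ring
    rw [e00] at he00
    rw [e01, iPow_add] at he01
    rw [e10, iPow_add] at he10
    rw [e11, iPow_add, iPow_add, iPow_add] at he11
    have h1 : lam * iPow (c ∅) = 1 := by rw [← he00, h00]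
    have hPs : iPow (c {1}) = Complex.I ^ s := by
      have h2 : Complex.I ^ s = lam * (iPow (c ∅) * iPow (c {1})) := by rw [← h01, he01]
      linear_combination -h2 - iPow (c {1}) * h1
    have hPt : iPow (c {0}) = Complex.I ^ t := by
      have h2 : Complex.I ^ t = lam * (iPow (c ∅) * iPow (c {0})) := by rw [← h10, he10]
      linear_combination -h2 - iPow (c {0}) * h1
    rw [hPs, hPt] at he11
    rcases iPow_two_mul u with h2 | h2 <;> rw [h2] at he11
    · left
      rw [he11, pow_add]
      linear_combination (Complex.I ^ s * Complex.I ^ t) * h1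
    · right
      rw [he11, pow_add]
      linear_combination (-(Complex.I ^ s * Complex.I ^ t)) * h1
  · rintro (h11 | h11)
    · exact isAffine_of (s : ZMod 4) (t : ZMod 4) 0 f h00
        (by rw [h01, iPow_natCast]) (by rw [h10, iPow_natCast])
        (by rw [h11, show ((s : ZMod 4) + t + 2 * 0) = ((s + t : ℕ) : ZMod 4) by push_cast; ring,
              iPow_natCast])
    · refine isAffine_of (s : ZMod 4) (t : ZMod 4) 1 f h00
        (by rw [h01, iPow_natCast]) (by rw [h10, iPow_natCast]) ?_
      rw [h11, show ((s : ZMod 4) + t + 2 * 1) = ((s + t : ℕ) : ZMod 4) + 2 by push_cast; ring,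
        iPow_add, iPow_natCast]
      have : iPow 2 = -1 := by rw [iPow, show ((2:ZMod 4)).val = 2 by decide]; norm_num
      rw [this]; ring
end

section
/- Let a, b, c, d ∈ ℂ² with c and d linearly independent, and let n ≥ 3. If a^{⊗n} + b^{⊗n} = c^{⊗n} + d^{⊗n}, then there exist φ, ψ ∈ ℂ with φⁿ = ψⁿ = 1 such that either a = φc and b = ψd, or a = φd and b = ψc. -/
/-!
Pairing both sides with `ℓ^{⊗n}` for a linear form `ℓ` gives `ℓ(a)ⁿ + ℓ(b)ⁿ = ℓ(c)ⁿ + ℓ(d)ⁿ`.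
Writing `a = αc + βd`, `b = γc + δd` and evaluating on the dual basis of `(c, d)`, this says that
`(s, t) ↦ (αs + βt, γs + δt)` preserves the form `sⁿ + tⁿ`. As `n ≥ 3`, the coefficients of
`s tⁿ⁻¹` and `s² tⁿ⁻²` on the left must vanish, which forces `γ = 0` or `δ = 0`; the outer
coefficients `αⁿ + γⁿ = βⁿ + δⁿ = 1` then make the matrix diagonal or antidiagonal with entries
that are `n`-th roots of unity.
-/

open Polynomial Finset

section Tensor

variable {ι R : Type*} [Fintype ι] [CommSemiring R]

theorem dotProduct_pow_eq_sum_prod (ℓ v : ι → R) (n : ℕ) :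
    (ℓ ⬝ᵥ v) ^ n = ∑ x : Fin n → ι, (∏ i, ℓ (x i)) * ∏ i, v (x i) := by
  classical
  rw [dotProduct, sum_pow', Fintype.piFinset_univ]
  simp only [prod_mul_distrib]

theorem dual_pow_add_pow_eq_of_prod_add_prod_eq {n : ℕ} {a b c d : ι → R}
    (h : ∀ x : Fin n → ι,
      (∏ i, a (x i)) + (∏ i, b (x i)) = (∏ i, c (x i)) + (∏ i, d (x i)))
    (f : Module.Dual R (ι → R)) : f a ^ n + f b ^ n = f c ^ n + f d ^ n := by
  classical
  have hf : ∀ v, f v = (fun i => f (Pi.single i 1)) ⬝ᵥ v := fun v => by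
    conv_lhs => rw [pi_eq_sum_univ' v]
    simp [dotProduct, mul_comm]
  rw [hf a, hf b, hf c, hf d]
  simp only [dotProduct_pow_eq_sum_prod, ← sum_add_distrib, ← mul_add, h]

end Tensor

theorem coeff_C_mul_X_add_C_pow {R : Type*} [CommSemiring R] (α β : R) (n k : ℕ) :
    ((C α * X + C β) ^ n).coeff k = α ^ k * β ^ (n - k) * n.choose k := by
  have : (C α * X + C β) ^ n = ((X + C β) ^ n).comp (C α * X) := by
    simp [add_comp, pow_comp]
  rw [this, comp_C_mul_X_coeff, coeff_X_add_C_pow]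
  ring

section Domain

variable {R : Type*} [CommRing R] [IsDomain R]

theorem eq_zero_or_eq_zero_of_pow_add_pow_coeffs {m : ℕ} {α β γ δ : R}
    (h1 : α * β ^ (m + 1) + γ * δ ^ (m + 1) = 0) (h2 : α ^ 2 * β ^ m + γ ^ 2 * δ ^ m = 0)
    (h0 : β ^ (m + 2) + δ ^ (m + 2) = 1) : γ = 0 ∨ δ = 0 := by
  -- Squaring `h1` and dividing by `h2` would give `β ^ (m + 2) = -δ ^ (m + 2)`.
  have key : γ ^ 2 * δ ^ m * (β ^ (m + 2) + δ ^ (m + 2)) = 0 := by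
    linear_combination β ^ (m + 2) * h2 + (γ * δ ^ (m + 1) - α * β ^ (m + 1)) * h1
  rw [h0, mul_one] at key
  rcases mul_eq_zero.mp key with hγ | hδ
  · exact .inl (eq_zero_of_pow_eq_zero hγ)
  · exact .inr (eq_zero_of_pow_eq_zero hδ)

variable [CharZero R]

theorem pow_add_pow_coeff_eq_zero {n k : ℕ} {α β γ δ : R}
    (h : ∀ u, (α * u + β) ^ n + (γ * u + δ) ^ n = u ^ n + 1) (hk0 : 0 < k) (hkn : k < n) :
    α ^ k * β ^ (n - k) + γ ^ k * δ ^ (n - k) = 0 := by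
  have hP : (C α * X + C β) ^ n + (C γ * X + C δ) ^ n = (X ^ n + 1 : R[X]) :=
    Polynomial.funext (by simpa using h)
  have hk := congrArg (coeff · k) hP
  simp only [coeff_add, coeff_C_mul_X_add_C_pow, coeff_X_pow, coeff_one, hkn.ne, hk0.ne',
    if_false, add_zero, ← add_mul] at hk
  exact (mul_eq_zero.mp hk).resolve_right (Nat.cast_ne_zero.mpr (Nat.choose_pos hkn.le).ne')

theorem diagonal_or_antidiagonal_of_pow_add_pow_eq {n : ℕ} (hn : 3 ≤ n) {α β γ δ : R}
    (h : ∀ s t, (α * s + β * t) ^ n + (γ * s + δ * t) ^ n = s ^ n + t ^ n) :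
    (β = 0 ∧ γ = 0 ∧ α ^ n = 1 ∧ δ ^ n = 1) ∨ (α = 0 ∧ δ = 0 ∧ β ^ n = 1 ∧ γ ^ n = 1) := by
  have hn0 : n ≠ 0 := by omega
  have hαγ : α ^ n + γ ^ n = 1 := by simpa [hn0] using h 1 0
  have hβδ : β ^ n + δ ^ n = 1 := by simpa [hn0] using h 0 1
  have hu : ∀ u, (α * u + β) ^ n + (γ * u + δ) ^ n = u ^ n + 1 := fun u => by simpa using h u 1
  obtain ⟨m, rfl⟩ : ∃ m, n = m + 2 := ⟨n - 2, by omega⟩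
  have h1 : α * β ^ (m + 1) + γ * δ ^ (m + 1) = 0 := by
    simpa using pow_add_pow_coeff_eq_zero (k := 1) hu (by omega) (by omega)
  have h2 : α ^ 2 * β ^ m + γ ^ 2 * δ ^ m = 0 := by
    simpa using pow_add_pow_coeff_eq_zero (k := 2) hu (by omega) (by omega)
  rcases eq_zero_or_eq_zero_of_pow_add_pow_coeffs h1 h2 hβδ with hγ | hδ
  · subst hγ
    have hα : α ^ (m + 2) = 1 := by simpa using hαγ
    have hβ : β = 0 := by
      have : α * β ^ (m + 1) = 0 := by simpa using h1
      exact eq_zero_of_pow_eq_zero ((mul_eq_zero.mp this).resolve_left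
        (by rintro rfl; simp at hα))
    subst hβ
    exact .inl ⟨rfl, rfl, hα, by simpa using hβδ⟩
  · subst hδ
    have hβ : β ^ (m + 2) = 1 := by simpa using hβδ
    have hα : α = 0 := by
      have : α * β ^ (m + 1) = 0 := by simpa using h1
      exact (mul_eq_zero.mp this).resolve_right (pow_ne_zero _ (by rintro rfl; simp at hβ))
    subst hα
    exact .inr ⟨rfl, rfl, hβ, by simpa using hαγ⟩

end Domain

theorem exists_pow_eq_one_of_dual_pow_add_pow_eq {K V : Type*} [Field K] [CharZero K]
    [AddCommGroup V] [Module K V] (hV : Module.finrank K V = 2) {n : ℕ} (hn : 3 ≤ n)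
    {a b c d : V} (hcd : LinearIndependent K ![c, d])
    (h : ∀ f : Module.Dual K V, f a ^ n + f b ^ n = f c ^ n + f d ^ n) :
    ∃ φ ψ : K, φ ^ n = 1 ∧ ψ ^ n = 1 ∧ ((a = φ • c ∧ b = ψ • d) ∨ (a = φ • d ∧ b = ψ • c)) := by
  let B := basisOfLinearIndependentOfCardEqFinrank hcd (by simp [hV])
  have hB : ⇑B = ![c, d] := coe_basisOfLinearIndependentOfCardEqFinrank _ _
  have hrepr : ∀ v, v = B.coord 0 v • c + B.coord 1 v • d := fun v => by
    conv_lhs => rw [← B.sum_repr v]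
    simp [Fin.sum_univ_two, hB]
  have hcoord : ∀ s t v, (s • B.coord 0 + t • B.coord 1) v = B.coord 0 v * s + B.coord 1 v * t :=
    fun s t v => by simp [mul_comm]
  have hform : ∀ s t, (B.coord 0 a * s + B.coord 1 a * t) ^ n
      + (B.coord 0 b * s + B.coord 1 b * t) ^ n = s ^ n + t ^ n := fun s t => by
    have hc : B.coord 0 c = 1 ∧ B.coord 1 c = 0 := by
      simp [← show B 0 = c by simp [hB]]
    have hd : B.coord 0 d = 0 ∧ B.coord 1 d = 1 := by
      simp [← show B 1 = d by simp [hB]]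
    simpa [hcoord, hc, hd] using h (s • B.coord 0 + t • B.coord 1)
  rcases diagonal_or_antidiagonal_of_pow_add_pow_eq hn hform with
    ⟨hβ, hγ, hα, hδ⟩ | ⟨hα, hδ, hβ, hγ⟩
  · exact ⟨_, _, hα, hδ, .inl ⟨by simpa [hβ] using hrepr a, by simpa [hγ] using hrepr b⟩⟩
  · exact ⟨_, _, hβ, hγ, .inr ⟨by simpa [hα] using hrepr a, by simpa [hδ] using hrepr b⟩⟩


/-- rigidity of rank-2 symmetric tensor decompositions. -/
theorem tensor_power_decomposition (n : ℕ) (hn : 3 ≤ n)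
    (a b c d : ZMod 2 → ℂ)
    (hcd : LinearIndependent ℂ ![c, d])
    (h : ∀ x : Fin n → ZMod 2,
      (∏ i, a (x i)) + (∏ i, b (x i)) = (∏ i, c (x i)) + (∏ i, d (x i))) :
    ∃ φ ψ : ℂ, φ ^ n = 1 ∧ ψ ^ n = 1 ∧
      ((a = φ • c ∧ b = ψ • d) ∨ (a = φ • d ∧ b = ψ • c)) :=
  exists_pow_eq_one_of_dual_pow_add_pow_eq (by simp) hn hcd
    (dual_pow_add_pow_eq_of_prod_add_prod_eq h)
end

section
/- Let a, b, c, d ∈ ℂ, let f : {0,1}² → ℂ be the binary signature with f(0,0) = a, f(0,1) = b, f(1,0) = c, f(1,1) = d, and let g : {0,1}³ → ℂ be g = [a,b]^{⊗3} + [c,d]^{⊗3}, i.e., g(x₁,x₂,x₃) = ∏ᵢ [a,b](xᵢ) + ∏ᵢ [c,d](xᵢ) where [a,b](0) = a and [a,b](1) = b. Then f is of product type if and only if g is of product type. -/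
/-- `h` is in `ℰ`: its support is contained in a pair of antipodal points
`{α, ᾱ}` (over `ℤ₂`, the complement `ᾱ` is `α + 1`). -/
def InE {ι : Type*} (h : (ι → ZMod 2) → ℂ) : Prop :=
  ∃ α : ι → ZMod 2, ∀ x, h x ≠ 0 → x = α ∨ x = α + 1

/-- `f` is of product type (`f ∈ 𝒫`): it factors over a partition of its
variables into signatures from `ℰ`. -/
def IsProductType {ι : Type*} [Fintype ι] [DecidableEq ι]
    (f : (ι → ZMod 2) → ℂ) : Prop :=
  ∃ (k : ℕ) (I : Fin k → Finset ι)
    (g : (j : Fin k) → ({i // i ∈ I j} → ZMod 2) → ℂ),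
    (∀ j, (I j).Nonempty) ∧
    (∀ j j', j ≠ j' → Disjoint (I j) (I j')) ∧
    (∀ i : ι, ∃ j, i ∈ I j) ∧
    (∀ j, InE (g j)) ∧
    ∀ x : ι → ZMod 2, f x = ∏ j, g j (fun i => x i.1)

/-!
A product-type signature of arity at most three either lies in `ℰ` (one block) or has a
singleton block `{i}`; in the latter case `f x = u (x i) * R x` with `R` independent of `x i`,
so the flattening of `f` along `i` has rank at most one.

For `f` this gives `f ∈ ℰ`, i.e. `b = c = 0` or `a = d = 0`, or `ad = bc`. The value of `g` on
an input of Hamming weight `w` is `G w = a^(3-w) b^w + c^(3-w) d^w`. If `g ∈ ℰ` then `G 1 = G 2 = 0`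
(each weight class has three elements); otherwise the rank-one flattening gives the vanishing
Hankel minors `G 0 * G 2 = G 1 ^ 2` and `G 1 * G 3 = G 2 ^ 2`. These hold in both cases, and
`G 0 * G 2 - G 1 ^ 2 = a c (ad - bc)^2`, `G 1 * G 3 - G 2 ^ 2 = b d (ad - bc)^2` force the same
criterion on `a, b, c, d`. Conversely, if `ad = bc`, write `(a, b, c, d) = (pr, ps, qr, qs)`;
then `f = [p, q] ⊗ [r, s]` and `g = (p^3 + q^3) [r, s]^⊗3`. In the other two cases both signatures
are supported on a pair of antipodal points.
-/

open Finset Function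

theorem zmod_two_eq_zero_or_eq_one (z : ZMod 2) : z = 0 ∨ z = 1 := by
  revert z; decide

section ProductType

variable {ι : Type*}

theorem InE.mul_eq_zero {h : (ι → ZMod 2) → ℂ} (hh : InE h) {x y : ι → ZMod 2}
    (hxy : x ≠ y) (hxy' : x ≠ y + 1) : h x * h y = 0 := by
  obtain ⟨α, hα⟩ := hh
  have h2 : α + 1 + 1 = α := by
    rw [add_assoc, show (1 : ι → ZMod 2) + 1 = 0 from funext fun _ => rfl, add_zero]
  by_contra hne
  rcases hα x (left_ne_zero_of_mul hne) with rfl | rfl <;>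
    rcases hα y (right_ne_zero_of_mul hne) with rfl | rfl
  exacts [hxy rfl, hxy' h2.symm, hxy' rfl, hxy rfl]

theorem InE.const_mul {h : (ι → ZMod 2) → ℂ} (hh : InE h) (κ : ℂ) :
    InE (fun x => κ * h x) := by
  obtain ⟨α, hα⟩ := hh
  exact ⟨α, fun x hx => hα x (right_ne_zero_of_mul hx)⟩

variable [Fintype ι] [DecidableEq ι]

theorem InE.isProductType [Nonempty ι] {f : (ι → ZMod 2) → ℂ} (hf : InE f) :
    IsProductType f := by
  obtain ⟨α, hα⟩ := hf
  refine ⟨1, fun _ => univ, fun _ y => f (fun i => y ⟨i, mem_univ i⟩),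
    fun _ => univ_nonempty, fun j j' hjj' => absurd (Subsingleton.elim j j') hjj',
    fun i => ⟨0, mem_univ i⟩, fun _ => ⟨fun i => α i.1, fun y hy => ?_⟩, fun x => ?_⟩
  · rcases hα _ hy with h | h
    · exact Or.inl (funext fun i => congrFun h i.1)
    · exact Or.inr (funext fun i => congrFun h i.1)
  · rw [Fin.prod_univ_one]

theorem isProductType_of_prod {f : (ι → ZMod 2) → ℂ} (u : ι → ZMod 2 → ℂ)
    (hf : ∀ x, f x = ∏ i, u i (x i)) : IsProductType f := by
  set e := (Fintype.equivFin ι).symm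
  refine ⟨Fintype.card ι, fun j => {e j}, fun j y => u (e j) (y ⟨e j, mem_singleton_self _⟩),
    fun j => singleton_nonempty _, fun j j' hjj' => disjoint_singleton.mpr (e.injective.ne hjj'),
    fun i => ⟨e.symm i, by simp⟩, fun j => ⟨0, fun y _ => ?_⟩, fun x => ?_⟩
  · have hy : ∀ k, y k = y ⟨e j, mem_singleton_self _⟩ :=
      fun k => congrArg y (Subtype.ext (mem_singleton.mp k.2))
    rcases zmod_two_eq_zero_or_eq_one (y ⟨e j, mem_singleton_self _⟩) with h | h
    · exact Or.inl (funext fun k => (hy k).trans h)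
    · exact Or.inr (funext fun k => (hy k).trans h)
  · rw [hf, ← e.prod_comp]

theorem IsProductType.const_mul [Nonempty ι] {f : (ι → ZMod 2) → ℂ} (hf : IsProductType f)
    (κ : ℂ) : IsProductType (fun x => κ * f x) := by
  obtain ⟨k, I, g, hne, hdisj, hcov, hE, hprod⟩ := hf
  obtain ⟨j₀, -⟩ := hcov (Classical.arbitrary ι)
  refine ⟨k, I, fun j y => (Pi.mulSingle j₀ κ : Fin k → ℂ) j * g j y, hne, hdisj, hcov,
    fun j => ?_, fun x => ?_⟩
  · exact (hE j).const_mul _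
  · rw [prod_mul_distrib, prod_pi_mulSingle', if_pos (mem_univ _), ← hprod]

end ProductType

section Blocks

variable {ι : Type*} {k : ℕ} {I : Fin k → Finset ι}
  {g : (j : Fin k) → ({i // i ∈ I j} → ZMod 2) → ℂ}

theorem inE_prod_blocks_of_eq_univ [Fintype ι] (hE : ∀ j, InE (g j)) {j₀ : Fin k}
    (hj₀ : I j₀ = univ) : InE (fun x : ι → ZMod 2 => ∏ j, g j (fun i => x i.1)) := by
  obtain ⟨α, hα⟩ := hE j₀
  have hmem (i : ι) : i ∈ I j₀ := hj₀ ▸ mem_univ i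
  refine ⟨fun i => α ⟨i, hmem i⟩, fun x hx => ?_⟩
  rcases hα _ (prod_ne_zero_iff.mp hx j₀ (mem_univ _)) with h | h
  · exact Or.inl (funext fun i => congrFun h ⟨i, hmem i⟩)
  · exact Or.inr (funext fun i => congrFun h ⟨i, hmem i⟩)

theorem prod_blocks_update_of_eq_singleton [DecidableEq ι]
    (hdisj : ∀ j j', j ≠ j' → Disjoint (I j) (I j')) {j₀ : Fin k} {i₀ : ι} (hj₀ : I j₀ = {i₀}) (x : ι → ZMod 2) (v : ZMod 2) :
    ∏ j, g j (fun i => update x i₀ v i.1) =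
      g j₀ (fun _ => v) * ∏ j ∈ univ.erase j₀, g j (fun i => x i.1) := by
  rw [← mul_prod_erase univ _ (mem_univ j₀)]
  congr 1
  · congr 1
    funext i
    have hi : i.1 = i₀ := mem_singleton.mp (hj₀ ▸ i.2)
    rw [hi, update_self]
  · refine prod_congr rfl fun j hj => congrArg (g j) (funext fun i => update_of_ne ?_ _ _)
    rintro rfl
    exact disjoint_left.mp (hdisj j j₀ (ne_of_mem_erase hj)) i.2 (hj₀ ▸ mem_singleton_self _)

theorem exists_eq_univ_or_eq_singleton [Fintype ι] [DecidableEq ι] [Nonempty ι]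
    (hcard : Fintype.card ι ≤ 3) (hne : ∀ j, (I j).Nonempty) (hdisj : ∀ j j', j ≠ j' → Disjoint (I j) (I j'))
    (hcov : ∀ i, ∃ j, i ∈ I j) : ∃ j, I j = univ ∨ ∃ i, I j = {i} := by
  by_contra! h
  have two_le (j) : 2 ≤ (I j).card :=
    one_lt_card_iff_nontrivial.mpr ((hne j).exists_eq_singleton_or_nontrivial.resolve_left
      fun ⟨i, hi⟩ => (h j).2 i hi)
  obtain ⟨j₀, -⟩ := hcov (Classical.arbitrary ι)
  obtain ⟨i₁, hi₁⟩ : ∃ i, i ∉ I j₀ := by simpa [eq_univ_iff_forall] using (h j₀).1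
  obtain ⟨j₁, hj₁⟩ := hcov i₁
  have hj : j₀ ≠ j₁ := by rintro rfl; exact hi₁ hj₁
  have := card_le_univ (I j₀ ∪ I j₁)
  rw [card_union_of_disjoint (hdisj _ _ hj)] at this
  linarith [two_le j₀, two_le j₁]

end Blocks

/-- The matrix `(v, x) ↦ f (update x i v)` has rank at most one. -/
def IsRankOneAlong {ι : Type*} [DecidableEq ι] (f : (ι → ZMod 2) → ℂ) (i : ι) : Prop :=
  ∀ x y, f (update x i 0) * f (update y i 1) = f (update y i 0) * f (update x i 1)

theorem IsProductType.inE_or_exists_isRankOneAlong {ι : Type*} [Fintype ι] [DecidableEq ι]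
    [Nonempty ι] {f : (ι → ZMod 2) → ℂ} (hf : IsProductType f) (hcard : Fintype.card ι ≤ 3) :
    InE f ∨ ∃ i, IsRankOneAlong f i := by
  obtain ⟨k, I, g, hne, hdisj, hcov, hE, hprod⟩ := hf
  have hf : f = fun x => ∏ j, g j (fun i => x i.1) := funext hprod
  obtain ⟨j₀, hj₀ | ⟨i₀, hj₀⟩⟩ := exists_eq_univ_or_eq_singleton hcard hne hdisj hcov
  · exact Or.inl (hf ▸ inE_prod_blocks_of_eq_univ hE hj₀)
  · refine Or.inr ⟨i₀, fun x y => ?_⟩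
    simp only [hf, prod_blocks_update_of_eq_singleton hdisj hj₀]
    ring

theorem exists_mul_eq_of_mul_eq_mul {a b c d : ℂ} (h : a * d = b * c) :
    ∃ p q r s : ℂ, a = p * r ∧ b = p * s ∧ c = q * r ∧ d = q * s := by
  by_cases ha : a = 0
  · by_cases hb : b = 0
    · exact ⟨0, 1, c, d, by simp [ha, hb]⟩
    · have hc : c = 0 := by simpa [ha, hb] using h
      exact ⟨1, d / b, 0, b, by field_simp; simp [ha, hc]⟩
  · exact ⟨1, c / a, a, b, by field_simp; simp [h]⟩

theorem vec_two_zmod_two_cases (x : Fin 2 → ZMod 2) :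
    x = ![0, 0] ∨ x = ![0, 1] ∨ x = ![1, 0] ∨ x = ![1, 1] := by
  revert x; decide

section Binary

variable {a b c d : ℂ} {f : (Fin 2 → ZMod 2) → ℂ}

theorem eq_ite_of_binary (h00 : f ![0, 0] = a) (h01 : f ![0, 1] = b) (h10 : f ![1, 0] = c)
    (h11 : f ![1, 1] = d) (x : Fin 2 → ZMod 2) :
    f x = if x 0 = 0 then (if x 1 = 0 then a else b) else (if x 1 = 0 then c else d) := by
  rcases vec_two_zmod_two_cases x with rfl | rfl | rfl | rfl <;> simp [*]

theorem criterion_of_isProductType_binary (hf : ∀ x, f x =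
      if x 0 = 0 then (if x 1 = 0 then a else b) else (if x 1 = 0 then c else d))
    (hP : IsProductType f) : a * d = b * c ∨ (b = 0 ∧ c = 0) ∨ (a = 0 ∧ d = 0) := by
  rcases hP.inE_or_exists_isRankOneAlong (by simp) with hE | ⟨i, hi⟩
  · have hab := hE.mul_eq_zero (x := ![0, 0]) (y := ![0, 1]) (by decide) (by decide)
    have hac := hE.mul_eq_zero (x := ![0, 0]) (y := ![1, 0]) (by decide) (by decide)
    have hdb := hE.mul_eq_zero (x := ![1, 1]) (y := ![0, 1]) (by decide) (by decide)
    have hdc := hE.mul_eq_zero (x := ![1, 1]) (y := ![1, 0]) (by decide) (by decide)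
    simp only [hf, Fin.isValue, Matrix.cons_val_zero, Matrix.cons_val_one, Matrix.cons_val_fin_one,
      one_ne_zero, ↓reduceIte, mul_eq_zero] at hab hac hdb hdc
    tauto
  · left
    fin_cases i <;> simpa [hf, update_apply, mul_comm] using hi 0 1

theorem isProductType_of_criterion_binary (hf : ∀ x, f x =
      if x 0 = 0 then (if x 1 = 0 then a else b) else (if x 1 = 0 then c else d))
    (hP : a * d = b * c ∨ (b = 0 ∧ c = 0) ∨ (a = 0 ∧ d = 0)) : IsProductType f := by
  rcases hP with h | ⟨hb, hc⟩ | ⟨ha, hd⟩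
  · obtain ⟨p, q, r, s, rfl, rfl, rfl, rfl⟩ := exists_mul_eq_of_mul_eq_mul h
    refine isProductType_of_prod
      ![fun v => if v = 0 then p else q, fun v => if v = 0 then r else s] fun x => ?_
    rw [hf, Fin.prod_univ_two]
    split_ifs <;> simp_all
  · refine InE.isProductType ⟨0, fun x hx => ?_⟩
    rcases vec_two_zmod_two_cases x with rfl | rfl | rfl | rfl <;> first | decide | simp_all
  · refine InE.isProductType ⟨![0, 1], fun x hx => ?_⟩
    rcases vec_two_zmod_two_cases x with rfl | rfl | rfl | rfl <;> first | decide | simp_all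

theorem isProductType_iff_binary (hf : ∀ x, f x =
      if x 0 = 0 then (if x 1 = 0 then a else b) else (if x 1 = 0 then c else d)) :
    IsProductType f ↔ a * d = b * c ∨ (b = 0 ∧ c = 0) ∨ (a = 0 ∧ d = 0) :=
  ⟨criterion_of_isProductType_binary hf, isProductType_of_criterion_binary hf⟩

end Binary

theorem criterion_of_hankel {a b c d : ℂ}
    (h₁ : (a ^ 3 + c ^ 3) * (a * b ^ 2 + c * d ^ 2) = (a ^ 2 * b + c ^ 2 * d) ^ 2)
    (h₂ : (a ^ 2 * b + c ^ 2 * d) * (b ^ 3 + d ^ 3) = (a * b ^ 2 + c * d ^ 2) ^ 2) :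
    a * d = b * c ∨ (b = 0 ∧ c = 0) ∨ (a = 0 ∧ d = 0) := by
  by_cases h : a * d = b * c
  · exact Or.inl h
  have hsq : (a * d - b * c) ^ 2 ≠ 0 := pow_ne_zero _ (sub_ne_zero.mpr h)
  have hac : a * c * (a * d - b * c) ^ 2 = 0 := by linear_combination h₁
  have hbd : b * d * (a * d - b * c) ^ 2 = 0 := by linear_combination h₂
  rcases mul_eq_zero.mp ((mul_eq_zero.mp hac).resolve_right hsq) with ha | hc <;>
    rcases mul_eq_zero.mp ((mul_eq_zero.mp hbd).resolve_right hsq) with hb | hd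
  · exact absurd (by simp [ha, hb]) h
  · exact Or.inr (Or.inr ⟨ha, hd⟩)
  · exact Or.inr (Or.inl ⟨hb, hc⟩)
  · exact absurd (by simp [hc, hd]) h

theorem inE_prod_add_prod {ι : Type*} [Fintype ι] {u v : ZMod 2 → ℂ} (hu : u 1 = 0)
    (hv : v 0 = 0) : InE (fun x : ι → ZMod 2 => ∏ i, u (x i) + ∏ i, v (x i)) := by
  refine ⟨0, fun x hx => ?_⟩
  rcases ne_or_eq (∏ i, u (x i)) 0 with hux | hux
  · refine Or.inl (funext fun i => ?_)
    have := prod_ne_zero_iff.mp hux i (mem_univ _)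
    rcases zmod_two_eq_zero_or_eq_one (x i) with h | h
    · exact h
    · simp_all
  · replace hx : ∏ i, v (x i) ≠ 0 := by simpa [hux] using hx
    refine Or.inr (funext fun i => ?_)
    have := prod_ne_zero_iff.mp hx i (mem_univ _)
    rcases zmod_two_eq_zero_or_eq_one (x i) with h | h
    · simp_all
    · simpa using h

section Symmetrized

variable {a b c d : ℂ} {g : (Fin 3 → ZMod 2) → ℂ}

theorem hankel_of_isProductType_symmetrized
    (hg : ∀ x, g x = (∏ i, if x i = 0 then a else b) + (∏ i, if x i = 0 then c else d))
    (hP : IsProductType g) :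
    (a ^ 3 + c ^ 3) * (a * b ^ 2 + c * d ^ 2) = (a ^ 2 * b + c ^ 2 * d) ^ 2 ∧
      (a ^ 2 * b + c ^ 2 * d) * (b ^ 3 + d ^ 3) = (a * b ^ 2 + c * d ^ 2) ^ 2 := by
  rcases hP.inE_or_exists_isRankOneAlong (by simp) with hE | ⟨i, hi⟩
  · have hG₁ : (a ^ 2 * b + c ^ 2 * d) * (a ^ 2 * b + c ^ 2 * d) = 0 := by
      convert hE.mul_eq_zero (x := ![0, 0, 1]) (y := ![0, 1, 0]) (by decide) (by decide) using 1
      simp only [hg, Fin.prod_univ_three, Fin.isValue, Matrix.cons_val_zero, Matrix.cons_val_one,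
        Matrix.cons_val, one_ne_zero, ↓reduceIte]
      ring
    have hG₂ : (a * b ^ 2 + c * d ^ 2) * (a * b ^ 2 + c * d ^ 2) = 0 := by
      convert hE.mul_eq_zero (x := ![0, 1, 1]) (y := ![1, 0, 1]) (by decide) (by decide) using 1
      simp only [hg, Fin.prod_univ_three, Fin.isValue, Matrix.cons_val_zero, Matrix.cons_val_one,
        Matrix.cons_val, one_ne_zero, ↓reduceIte]
      ring
    simp [mul_self_eq_zero.mp hG₁, mul_self_eq_zero.mp hG₂]
  · have h₁ := hi 0 (Pi.single (i + 1) 1)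
    have h₂ := hi (Pi.single (i + 1) 1) 1
    fin_cases i <;>
      simp only [hg, Fin.prod_univ_three, update_apply, Pi.single_apply, Pi.zero_apply,
        Pi.one_apply, Fin.reduceFinMk, Fin.isValue, Fin.reduceAdd, Fin.reduceEq, one_ne_zero,
        ↓reduceIte] at h₁ h₂ <;>
      exact ⟨by linear_combination h₁, by linear_combination h₂⟩

theorem isProductType_of_criterion_symmetrized
    (hg : ∀ x, g x = (∏ i, if x i = 0 then a else b) + (∏ i, if x i = 0 then c else d))
    (hP : a * d = b * c ∨ (b = 0 ∧ c = 0) ∨ (a = 0 ∧ d = 0)) : IsProductType g := by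
  rcases hP with h | ⟨hb, hc⟩ | ⟨ha, hd⟩
  · obtain ⟨p, q, r, s, rfl, rfl, rfl, rfl⟩ := exists_mul_eq_of_mul_eq_mul h
    have hg' : g = fun x => (p ^ 3 + q ^ 3) * ∏ i, (if x i = 0 then r else s) := funext fun x => by
      simp only [hg, ← mul_ite, prod_mul_distrib, prod_const, card_univ, Fintype.card_fin]
      ring
    rw [hg']
    exact (isProductType_of_prod (fun _ v => if v = 0 then r else s) fun _ => rfl).const_mul _
  · rw [funext hg]
    exact (inE_prod_add_prod (u := fun z => if z = 0 then a else b)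
      (v := fun z => if z = 0 then c else d) (by simp [hb]) (by simp [hc])).isProductType
  · rw [funext fun x => (hg x).trans (add_comm _ _)]
    exact (inE_prod_add_prod (u := fun z => if z = 0 then c else d)
      (v := fun z => if z = 0 then a else b) (by simp [hd]) (by simp [ha])).isProductType

theorem isProductType_iff_symmetrized
    (hg : ∀ x, g x = (∏ i, if x i = 0 then a else b) + (∏ i, if x i = 0 then c else d)) :
    IsProductType g ↔ a * d = b * c ∨ (b = 0 ∧ c = 0) ∨ (a = 0 ∧ d = 0) :=
  ⟨fun hP => (hankel_of_isProductType_symmetrized hg hP).elim criterion_of_hankel,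
    isProductType_of_criterion_symmetrized hg⟩

end Symmetrized

theorem binary_product_iff_symmetrized_product (a b c d : ℂ)
    (f : (Fin 2 → ZMod 2) → ℂ)
    (h00 : f ![0, 0] = a) (h01 : f ![0, 1] = b)
    (h10 : f ![1, 0] = c) (h11 : f ![1, 1] = d)
    (g : (Fin 3 → ZMod 2) → ℂ)
    (hg : ∀ x, g x = (∏ i, if x i = 0 then a else b) +
                     (∏ i, if x i = 0 then c else d)) :
    IsProductType f ↔ IsProductType g :=
  (isProductType_iff_binary (eq_ite_of_binary h00 h01 h10 h11)).trans
    (isProductType_iff_symmetrized hg).symm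
end

section
/- Let f : {0,1}ⁿ → ℂ be not identically zero. Suppose f = ∏_{i=1}^k fᵢ and f = ∏_{j=1}^ℓ gⱼ are two decompositions in which each fᵢ depends only on the coordinates in Iᵢ and each gⱼ depends only on the coordinates in Jⱼ, where {I₁,…,I_k} and {J₁,…,J_ℓ} are partitions of {1,…,n} into nonempty blocks, and every factor fᵢ and gⱼ is indecomposable. Then k = ℓ and there is a bijection π of {1,…,k} with Iᵢ = J_{π(i)} and fᵢ = cᵢ · g_{π(i)} for some nonzero constants cᵢ (1 ≤ i ≤ k). -/
/-- `h` depends only on the coordinates in `T`. -/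
def DependsOnlyOn {n : ℕ} (h : (Fin n → ZMod 2) → ℂ) (T : Finset (Fin n)) : Prop :=
  ∀ x y, (∀ i ∈ T, x i = y i) → h x = h y

/-- `h`, depending only on `T`, is indecomposable: it cannot be written as a
product `h₁ · h₂` with `h₁, h₂` depending only on disjoint nonempty sets
`T₁, T₂` with `T₁ ∪ T₂ = T`. -/
def Indecomposable {n : ℕ} (h : (Fin n → ZMod 2) → ℂ) (T : Finset (Fin n)) : Prop :=
  DependsOnlyOn h T ∧
    ¬ ∃ (h₁ h₂ : (Fin n → ZMod 2) → ℂ) (T₁ T₂ : Finset (Fin n)),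
        T₁.Nonempty ∧ T₂.Nonempty ∧ Disjoint T₁ T₂ ∧ T₁ ∪ T₂ = T ∧
        DependsOnlyOn h₁ T₁ ∧ DependsOnlyOn h₂ T₂ ∧ ∀ x, h x = h₁ x * h₂ x

open Finset

def combineFn {n : ℕ} (T : Finset (Fin n)) (x y : Fin n → ZMod 2) : Fin n → ZMod 2 :=
  fun p => if p ∈ T then x p else y p

lemma combineFn_congr {n : ℕ} {T S : Finset (Fin n)} {x y : Fin n → ZMod 2}
    (x₀ : Fin n → ZMod 2) (hTS : T ⊆ S) (hxy : ∀ p ∈ S, x p = y p) :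
    combineFn T x x₀ = combineFn T y x₀ := by
  funext p
  by_cases hp : p ∈ T
  · simp [combineFn, hp, hxy p (hTS hp)]
  · simp [combineFn, hp]

/-- Evaluating `f` on `x` spliced into `x₀` along a block of the partition. -/
lemma eval_combine {n k : ℕ} (f : (Fin n → ZMod 2) → ℂ)
    (F : Fin k → (Fin n → ZMod 2) → ℂ) (I : Fin k → Finset (Fin n))
    (hIdisj : ∀ i i', i ≠ i' → Disjoint (I i) (I i'))
    (hFdep : ∀ i, DependsOnlyOn (F i) (I i))
    (hFeq : ∀ x, f x = ∏ i, F i x)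
    (x₀ : Fin n → ZMod 2) (i : Fin k) (x : Fin n → ZMod 2) :
    f (combineFn (I i) x x₀) = F i x * ∏ i' ∈ Finset.univ.erase i, F i' x₀ := by
  rw [hFeq, ← Finset.mul_prod_erase _ _ (Finset.mem_univ i)]
  congr 1
  · apply hFdep i
    intro p hp
    simp [combineFn, hp]
  · apply Finset.prod_congr rfl
    intro i' hi'
    apply hFdep i'
    intro p hp
    have hni : p ∉ I i := Finset.disjoint_left.mp (hIdisj i' i (Finset.ne_of_mem_erase hi')) hp
    simp [combineFn, hni]

lemma split_combine {n l : ℕ} (f : (Fin n → ZMod 2) → ℂ)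
    (G : Fin l → (Fin n → ZMod 2) → ℂ) (J : Fin l → Finset (Fin n))
    (hGdep : ∀ j, DependsOnlyOn (G j) (J j))
    (hGeq : ∀ x, f x = ∏ j, G j x)
    (x₀ : Fin n → ZMod 2) (T : Finset (Fin n)) (x : Fin n → ZMod 2) :
    f (combineFn T x x₀) = ∏ j, G j (combineFn (T ∩ J j) x x₀) := by
  rw [hGeq]
  apply Finset.prod_congr rfl
  intro j _
  apply hGdep j
  intro p hp
  by_cases hpT : p ∈ T
  · simp [combineFn, hpT, hp]
  · simp [combineFn, hpT]

/-- Each block of `I` is contained in some block of `J`. -/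
lemma block_subset {n k l : ℕ} (f : (Fin n → ZMod 2) → ℂ)
    (x₀ : Fin n → ZMod 2) (hx₀ : f x₀ ≠ 0)
    (F : Fin k → (Fin n → ZMod 2) → ℂ) (I : Fin k → Finset (Fin n))
    (G : Fin l → (Fin n → ZMod 2) → ℂ) (J : Fin l → Finset (Fin n))
    (hIne : ∀ i, (I i).Nonempty)
    (hIdisj : ∀ i i', i ≠ i' → Disjoint (I i) (I i'))
    (hJdisj : ∀ j j', j ≠ j' → Disjoint (J j) (J j'))
    (hJcov : ∀ p : Fin n, ∃ j, p ∈ J j)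
    (hFind : ∀ i, Indecomposable (F i) (I i))
    (hGdep : ∀ j, DependsOnlyOn (G j) (J j))
    (hFeq : ∀ x, f x = ∏ i, F i x)
    (hGeq : ∀ x, f x = ∏ j, G j x) :
    ∀ i, ∃ j, I i ⊆ J j := by
  have hFdep : ∀ i, DependsOnlyOn (F i) (I i) := fun i => (hFind i).1
  have hF0 : ∀ i, F i x₀ ≠ 0 := by
    intro i hi
    exact hx₀ (by rw [hFeq]; exact Finset.prod_eq_zero (Finset.mem_univ i) hi)
  have hG0 : ∀ j, G j x₀ ≠ 0 := by
    intro j hj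
    exact hx₀ (by rw [hGeq]; exact Finset.prod_eq_zero (Finset.mem_univ j) hj)
  intro i
  -- find j₁ meeting I i
  obtain ⟨p, hp⟩ := hIne i
  obtain ⟨j₁, hj₁⟩ := hJcov p
  by_contra hcon
  push_neg at hcon
  obtain ⟨q, hq, hqJ⟩ := (Finset.not_subset).mp (hcon j₁)
  -- constants
  set C : ℂ := ∏ i' ∈ Finset.univ.erase i, F i' x₀ with hC
  set E : ℂ := ∏ j : Fin l, ∏ j' ∈ Finset.univ.erase j, G j' x₀ with hE
  have hCne : C ≠ 0 := Finset.prod_ne_zero_iff.mpr (fun i' _ => hF0 i')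
  have hEne : E ≠ 0 :=
    Finset.prod_ne_zero_iff.mpr
      (fun j _ => Finset.prod_ne_zero_iff.mpr (fun j' _ => hG0 j'))
  -- key product identity
  have hsplit1 : ∀ j x, f (combineFn (I i ∩ J j) x x₀)
      = G j (combineFn (I i ∩ J j) x x₀) * ∏ j' ∈ Finset.univ.erase j, G j' x₀ := by
    intro j x
    rw [split_combine f G J hGdep hGeq x₀ (I i ∩ J j) x,
      ← Finset.mul_prod_erase _ _ (Finset.mem_univ j)]
    congr 1
    · rw [Finset.inter_assoc, Finset.inter_self]
    · apply Finset.prod_congr rfl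
      intro j' hj'
      apply hGdep j'
      intro r hr
      have hmem : r ∉ I i ∩ J j ∩ J j' := by
        intro hmem
        have hrJ : r ∈ J j := (Finset.mem_inter.mp (Finset.mem_inter.mp hmem).1).2
        exact (Finset.disjoint_left.mp (hJdisj j' j (Finset.ne_of_mem_erase hj')) hr) hrJ
      simp only [combineFn, if_neg hmem]
  have hprod : ∀ x, ∏ j, f (combineFn (I i ∩ J j) x x₀) = F i x * (C * E) := by
    intro x
    calc ∏ j, f (combineFn (I i ∩ J j) x x₀)
        = ∏ j, (G j (combineFn (I i ∩ J j) x x₀) * ∏ j' ∈ Finset.univ.erase j, G j' x₀) :=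
          Finset.prod_congr rfl (fun j _ => hsplit1 j x)
      _ = (∏ j, G j (combineFn (I i ∩ J j) x x₀)) * E := by
          rw [Finset.prod_mul_distrib]
      _ = f (combineFn (I i) x x₀) * E := by
          rw [split_combine f G J hGdep hGeq x₀ (I i) x]
      _ = F i x * (C * E) := by
          rw [eval_combine f F I hIdisj hFdep hFeq x₀ i x, hC, mul_assoc]
  -- build the decomposition contradicting indecomposability
  refine (hFind i).2 ⟨fun x => f (combineFn (I i ∩ J j₁) x x₀),
    fun x => (C * E)⁻¹ * ∏ j ∈ Finset.univ.erase j₁, f (combineFn (I i ∩ J j) x x₀),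
    I i ∩ J j₁, I i \ J j₁, ⟨p, Finset.mem_inter.mpr ⟨hp, hj₁⟩⟩,
    ⟨q, Finset.mem_sdiff.mpr ⟨hq, hqJ⟩⟩, ?_, ?_, ?_, ?_, ?_⟩
  · exact Finset.disjoint_left.mpr (fun a ha hb =>
      (Finset.mem_sdiff.mp hb).2 (Finset.mem_inter.mp ha).2)
  · ext r
    simp only [Finset.mem_union, Finset.mem_inter, Finset.mem_sdiff]
    tauto
  · intro x y hxy
    show f (combineFn (I i ∩ J j₁) x x₀) = f (combineFn (I i ∩ J j₁) y x₀)
    rw [combineFn_congr x₀ (le_refl _) hxy]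
  · intro x y hxy
    show (C * E)⁻¹ * ∏ j ∈ Finset.univ.erase j₁, f (combineFn (I i ∩ J j) x x₀)
       = (C * E)⁻¹ * ∏ j ∈ Finset.univ.erase j₁, f (combineFn (I i ∩ J j) y x₀)
    congr 1
    apply Finset.prod_congr rfl
    intro j hj
    have hsub : I i ∩ J j ⊆ I i \ J j₁ := by
      intro r hr
      obtain ⟨hr1, hr2⟩ := Finset.mem_inter.mp hr
      refine Finset.mem_sdiff.mpr ⟨hr1, fun hrj₁ => ?_⟩
      exact (Finset.disjoint_left.mp (hJdisj j j₁ (Finset.ne_of_mem_erase hj)) hr2) hrj₁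
    rw [combineFn_congr x₀ hsub hxy]
  · intro x
    have h1 := hprod x
    have h2 : F i x = (C * E)⁻¹ * ∏ j, f (combineFn (I i ∩ J j) x x₀) := by
      rw [h1]; field_simp
    rw [h2, ← Finset.mul_prod_erase _ _ (Finset.mem_univ j₁)]
    ring

/-- uniqueness of the primitive decomposition. -/
theorem primitive_decomposition_unique (n k l : ℕ)
    (f : (Fin n → ZMod 2) → ℂ) (hf : ∃ x, f x ≠ 0)
    (F : Fin k → (Fin n → ZMod 2) → ℂ) (I : Fin k → Finset (Fin n))
    (G : Fin l → (Fin n → ZMod 2) → ℂ) (J : Fin l → Finset (Fin n))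
    (hIne : ∀ i, (I i).Nonempty)
    (hIdisj : ∀ i i', i ≠ i' → Disjoint (I i) (I i'))
    (hIcov : ∀ p : Fin n, ∃ i, p ∈ I i)
    (hJne : ∀ j, (J j).Nonempty)
    (hJdisj : ∀ j j', j ≠ j' → Disjoint (J j) (J j'))
    (hJcov : ∀ p : Fin n, ∃ j, p ∈ J j)
    (hFind : ∀ i, Indecomposable (F i) (I i))
    (hGind : ∀ j, Indecomposable (G j) (J j))
    (hFeq : ∀ x, f x = ∏ i, F i x)
    (hGeq : ∀ x, f x = ∏ j, G j x) :
    k = l ∧ ∃ e : Fin k ≃ Fin l, ∀ i,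
      I i = J (e i) ∧ ∃ c : ℂ, c ≠ 0 ∧ ∀ x, F i x = c * G (e i) x := by
  classical
  obtain ⟨x₀, hx₀⟩ := hf
  have hFdep : ∀ i, DependsOnlyOn (F i) (I i) := fun i => (hFind i).1
  have hGdep : ∀ j, DependsOnlyOn (G j) (J j) := fun j => (hGind j).1
  have hIJ : ∀ i, ∃ j, I i ⊆ J j :=
    block_subset f x₀ hx₀ F I G J hIne hIdisj hJdisj hJcov hFind hGdep hFeq hGeq
  have hJI : ∀ j, ∃ i, J j ⊆ I i :=
    block_subset f x₀ hx₀ G J F I hJne hJdisj hIdisj hIcov hGind hFdep hGeq hFeq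
  set π : Fin k → Fin l := fun i => (hIJ i).choose with hπ
  have hEq : ∀ i, I i = J (π i) := by
    intro i
    have h1 : I i ⊆ J (π i) := (hIJ i).choose_spec
    obtain ⟨i', hi'⟩ := hJI (π i)
    have hii' : i = i' := by
      by_contra hne
      obtain ⟨p, hp⟩ := hIne i
      exact (Finset.disjoint_left.mp (hIdisj i i' hne) hp) (hi' (h1 hp))
    subst hii'
    exact Finset.Subset.antisymm h1 hi'
  have hinj : Function.Injective π := by
    intro i i' h
    by_contra hne
    obtain ⟨p, hp⟩ := hIne i
    have hp' : p ∈ I i' := by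
      rw [hEq i', ← h, ← hEq i]; exact hp
    exact (Finset.disjoint_left.mp (hIdisj i i' hne) hp) hp'
  have hsurj : Function.Surjective π := by
    intro j
    obtain ⟨i, hi⟩ := hJI j
    refine ⟨i, ?_⟩
    by_contra hne
    obtain ⟨p, hp⟩ := hJne j
    have hp2 : p ∈ J (π i) := by rw [← hEq i]; exact hi hp
    exact (Finset.disjoint_left.mp (hJdisj (π i) j hne) hp2) hp
  have hF0 : ∀ i, F i x₀ ≠ 0 := by
    intro i hi
    exact hx₀ (by rw [hFeq]; exact Finset.prod_eq_zero (Finset.mem_univ i) hi)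
  have hG0 : ∀ j, G j x₀ ≠ 0 := by
    intro j hj
    exact hx₀ (by rw [hGeq]; exact Finset.prod_eq_zero (Finset.mem_univ j) hj)
  refine ⟨by simpa using Fintype.card_congr (Equiv.ofBijective π ⟨hinj, hsurj⟩),
    Equiv.ofBijective π ⟨hinj, hsurj⟩, fun i => ⟨hEq i, ?_⟩⟩
  set C : ℂ := ∏ i' ∈ Finset.univ.erase i, F i' x₀ with hC
  set D : ℂ := ∏ j' ∈ Finset.univ.erase (π i), G j' x₀ with hD
  have hCne : C ≠ 0 := Finset.prod_ne_zero_iff.mpr (fun i' _ => hF0 i')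
  have hDne : D ≠ 0 := Finset.prod_ne_zero_iff.mpr (fun j' _ => hG0 j')
  refine ⟨C⁻¹ * D, mul_ne_zero (inv_ne_zero hCne) hDne, fun x => ?_⟩
  have h1 := eval_combine f F I hIdisj hFdep hFeq x₀ i x
  have h2 := eval_combine f G J hJdisj hGdep hGeq x₀ (π i) x
  rw [hEq i] at h1
  have hFG : F i x * C = G (π i) x * D := by
    rw [← h1, ← h2]
  show F i x = C⁻¹ * D * G (π i) x
  calc F i x = (F i x * C) * C⁻¹ := by field_simp
    _ = (G (π i) x * D) * C⁻¹ := by rw [hFG]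
    _ = C⁻¹ * D * G (π i) x := by ring
end

section
/- Let S ⊆ ℤ₂ⁿ be an affine subspace of dimension k ≥ 2, and suppose no coordinate is constant on S, i.e., for every i ∈ {1,…,n} there exist u, v ∈ S with uᵢ ≠ vᵢ. Then there exists a free set X ⊆ {1,…,n} of size k that contains two consecutive indices j and j+1 for some j ∈ {1,…,n−1}. -/
/-- `S` is an affine subspace of `ℤ₂ⁿ` of dimension `k`. -/
def IsAffineSubspaceDim {n : ℕ} (S : Set (Fin n → ZMod 2)) (k : ℕ) : Prop :=
  ∃ (x₀ : Fin n → ZMod 2) (V : Submodule (ZMod 2) (Fin n → ZMod 2)),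
    Module.finrank (ZMod 2) ↥V = k ∧ S = {x | x + x₀ ∈ V}

/-- `X` is a set of free variables for `S`: the projection of `S` onto the
coordinates in `X` is a bijection onto `{0,1}^X`. -/
def IsFreeSet {n : ℕ} (S : Set (Fin n → ZMod 2)) (X : Finset (Fin n)) : Prop :=
  Set.BijOn (fun (x : Fin n → ZMod 2) => (fun i : {i // i ∈ X} => x i.1)) S Set.univ

/-!
Let `V` be the direction of `S`. The coordinates `x ↦ xᵢ`, restricted to `V`, span the dual
`V*`, and `X` is free as soon as `{xᵢ|V : i ∈ X}` is a basis of `V*`: spanning makes the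
projection to `X` injective, independence makes it surjective. No coordinate is constant on `S`,
so no `xᵢ|V` vanishes; if every consecutive pair `xⱼ|V, xⱼ₊₁|V` were dependent, all of them would
be multiples of the first one and `V*` would have dimension at most `1 < k`. An independent
consecutive pair, extended to a basis of `V*` by further coordinates, gives the free set.
-/

open Module Submodule Set

namespace Submodule

variable {K ι : Type*} [Field K] (V : Submodule K (ι → K))

def coordFunctional (i : ι) : Dual K V := LinearMap.proj i ∘ₗ V.subtype

def restrictCoords (X : Set ι) : V →ₗ[K] (X → K) := LinearMap.pi fun i : X ↦ V.coordFunctional i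

variable {V}

theorem coordFunctional_ne_zero {i : ι} {u v : ι → K} (hu : u ∈ V) (hv : v ∈ V)
    (huv : u i ≠ v i) : V.coordFunctional i ≠ 0 := fun h ↦
  huv <| sub_eq_zero.1 <| LinearMap.congr_fun h ⟨u - v, V.sub_mem hu hv⟩

variable (V) in
theorem span_range_coordFunctional [Finite ι] : span K (range V.coordFunctional) = ⊤ := by
  classical
  have : Fintype ι := Fintype.ofFinite ι
  have hproj : span K (range fun i : ι ↦ (LinearMap.proj i : Dual K (ι → K))) = ⊤ := by
    rw [← (Pi.basisFun K ι).dualBasis.span_eq]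
    congr! with i
    ext x
    simp
  rw [← LinearMap.range_eq_top.2 (LinearMap.dualMap_surjective_of_injective V.injective_subtype),
    ← map_top, ← hproj, map_span, ← range_comp]
  rfl

theorem injective_restrictCoords {X : Set ι} (hX : span K (V.coordFunctional '' X) = ⊤) :
    Function.Injective (V.restrictCoords X) := by
  refine (injective_iff_map_eq_zero _).2 fun v hv ↦
    (forall_dual_apply_eq_zero_iff K v).1 fun φ ↦ ?_
  have hφ : φ ∈ span K (V.coordFunctional '' X) := hX ▸ mem_top
  induction hφ using span_induction with
  | mem ψ hψ =>
    obtain ⟨i, hi, rfl⟩ := hψ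
    exact congr_fun hv ⟨i, hi⟩
  | zero => rfl
  | add ψ χ _ _ hψ hχ => simp [hψ, hχ]
  | smul a ψ _ hψ => simp [hψ]

theorem surjective_restrictCoords {X : Set ι} [Finite X]
    (hX : LinearIndepOn K V.coordFunctional X) : Function.Surjective (V.restrictCoords X) := by
  classical
  have : Fintype X := Fintype.ofFinite X
  let b := (Pi.basisFun K X).dualBasis
  have hdual : b.constr K (fun i ↦ V.coordFunctional i) = (V.restrictCoords X).dualMap := by
    refine b.ext fun i ↦ ?_
    rw [b.constr_basis]
    ext v
    simp [b, restrictCoords]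
  rw [← LinearMap.dualMap_injective_iff, ← hdual]
  exact b.injective_constr_of_linearIndependent hX

end Submodule

theorem exists_finset_linearIndepOn_superset {K ι W : Type*} [Field K] [AddCommGroup W]
    [Module K W] [Finite ι] {f : ι → W} (hf : span K (range f) = ⊤) {s : Set ι}
    (hs : LinearIndepOn K f s) :
    ∃ t : Finset ι, s ⊆ t ∧ LinearIndepOn K f t ∧ span K (f '' t) = ⊤ := by
  obtain ⟨t, -, hst, hspan, hli⟩ := exists_linearIndepOn_extension hs (subset_univ s)
  refine ⟨t.toFinite.toFinset, by simpa, by simpa, eq_top_iff.2 ?_⟩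
  rw [← hf, ← image_univ, Set.Finite.coe_toFinset]
  exact span_le.2 hspan

theorem exists_consecutive_linearIndepOn_pair {K W : Type*} [Field K] [AddCommGroup W]
    [Module K W] {n : ℕ} {f : Fin n → W} (hf : ∀ i, f i ≠ 0)
    (hrank : 1 < finrank K (span K (range f))) :
    ∃ j j' : Fin n, (j' : ℕ) = j + 1 ∧ LinearIndepOn K f {j, j'} := by
  by_contra! hdep
  obtain ⟨m, rfl⟩ : ∃ m, n = m + 1 := Nat.exists_eq_succ_of_ne_zero <| by
    rintro rfl
    rw [range_eq_empty, span_empty, finrank_bot] at hrank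
    omega
  have hmem : ∀ i, f i ∈ K ∙ f 0 := by
    refine Fin.induction (mem_span_singleton_self _) fun i hi ↦ ?_
    obtain ⟨c, hc⟩ : ∃ c : K, c • f i.castSucc = f i.succ := by
      simpa [linearIndepOn_pair_iff f (Fin.castSucc_lt_succ (i := i)).ne (hf _)]
        using hdep i.castSucc i.succ rfl
    exact hc ▸ smul_mem _ c hi
  have hle : finrank K (span K (range f)) ≤ 1 :=
    (Submodule.finrank_mono (span_le.2 (range_subset_iff.2 hmem))).trans
      ((finrank_span_le_card {f 0}).trans (by simp))
  omega

theorem isFreeSet_of_bijective_restrictCoords {n : ℕ} {x₀ : Fin n → ZMod 2}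
    {V : Submodule (ZMod 2) (Fin n → ZMod 2)} {X : Finset (Fin n)}
    (hX : Function.Bijective (V.restrictCoords X)) : IsFreeSet {x | x + x₀ ∈ V} X := by
  refine ⟨fun _ _ ↦ mem_univ _, fun x hx y hy hxy ↦ ?_, fun c _ ↦ ?_⟩
  · have : V.restrictCoords X ⟨x + x₀, hx⟩ = V.restrictCoords X ⟨y + x₀, hy⟩ := by
      funext i
      simp [restrictCoords, coordFunctional, congr_fun hxy i]
    simpa using congr_arg Subtype.val (hX.1 this)
  · obtain ⟨v, hv⟩ := hX.2 fun i ↦ c i + x₀ i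
    refine ⟨v - x₀, by simp, funext fun i ↦ ?_⟩
    have hvi : (v : Fin n → ZMod 2) i = c i + x₀ i := congr_fun hv i
    simp [hvi]

theorem free_set_with_consecutive_pair (n k : ℕ) (hk : 2 ≤ k)
    (S : Set (Fin n → ZMod 2)) (hS : IsAffineSubspaceDim S k)
    (hnc : ∀ i : Fin n, ∃ u ∈ S, ∃ v ∈ S, u i ≠ v i) :
    ∃ X : Finset (Fin n), X.card = k ∧ IsFreeSet S X ∧
      ∃ j j' : Fin n, j ∈ X ∧ j' ∈ X ∧ (j' : ℕ) = (j : ℕ) + 1 := by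
  obtain ⟨x₀, V, hdim, rfl⟩ := hS
  have hne (i : Fin n) : V.coordFunctional i ≠ 0 := by
    obtain ⟨u, hu, v, hv, huv⟩ := hnc i
    exact coordFunctional_ne_zero hu hv (by simpa using huv)
  have hspan := V.span_range_coordFunctional
  obtain ⟨j, j', hjj', hpair⟩ := exists_consecutive_linearIndepOn_pair hne
    (by rw [hspan, finrank_top, Subspace.dual_finrank_eq, hdim]; omega)
  obtain ⟨X, hjX, hli, hXspan⟩ := exists_finset_linearIndepOn_superset hspan hpair
  have hbij : Function.Bijective (V.restrictCoords X) :=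
    ⟨injective_restrictCoords hXspan, surjective_restrictCoords hli⟩
  refine ⟨X, ?_, isFreeSet_of_bijective_restrictCoords hbij, j, j', hjX (by simp),
    hjX (by simp), hjj'⟩
  simpa [hdim] using (LinearEquiv.ofBijective _ hbij).finrank_eq.symm
end

section
/- Let S ⊆ ℤ₂⁵ be an affine subspace of dimension 3, and suppose no coordinate is constant on S, i.e., for every i ∈ {1,…,5} there exist u, v ∈ S with uᵢ ≠ vᵢ. Then there exists a free set X ⊆ {1,…,5} of size 3 whose indices are cyclically consecutive, i.e., X = {i, i+1, i+2} with indices taken modulo 5. -/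
open Module Submodule

theorem Fin5.exists_forall_ne_eq_zero_or_eq {α : Type*} [Zero α] (c : Fin 5 → α)
    (h : ∀ j, c j = 0 ∨ c (j + 1) = 0 ∨ c j = c (j + 1)) :
    ∃ k v, ∀ l ≠ k, c l = 0 ∨ c l = v := by
  have five : ∀ l m : Fin 5, m = l ∨ m = l + 1 ∨ m = l + 2 ∨ m = l + 3 ∨ m = l + 4 := by decide
  by_cases hA : ∃ l, c l ≠ 0 ∧ c (l + 2) ≠ 0 ∧ c l ≠ c (l + 2)
  · -- two distinct nonzero labels at distance two force a zero between them and one beside them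
    obtain ⟨l, h0, h2, hne⟩ := hA
    have e1 : l + 1 + 1 = l + 2 := by grind
    have e3 : l + 3 = l + 2 + 1 := by grind
    have e4 : l + 4 = l + 3 + 1 := by grind
    have e0 : l + 4 + 1 = l := by grind
    have h1 : c (l + 1) = 0 := by grind
    have h34 : c (l + 3) = 0 ∨ c (l + 4) = 0 := by grind
    rcases h34 with h3 | h4
    · refine ⟨l + 2, c l, fun m hm => ?_⟩
      rcases five l m with rfl | rfl | rfl | rfl | rfl <;> grind
    · refine ⟨l, c (l + 2), fun m hm => ?_⟩
      rcases five l m with rfl | rfl | rfl | rfl | rfl <;> grind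
  · push Not at hA
    have hconst : ∀ l m, c l ≠ 0 → c m ≠ 0 → c l = c m := by
      intro l m hl hm
      have e4 : l + 4 + 1 = l := by grind
      have e3 : l + 3 + 2 = l := by grind
      rcases five l m with rfl | rfl | rfl | rfl | rfl <;> grind
    by_cases hN : ∃ m, c m ≠ 0
    · obtain ⟨m, hm⟩ := hN
      exact ⟨0, c m, fun l _ => (eq_or_ne (c l) 0).imp_right (hconst l m · hm)⟩
    · push Not at hN
      exact ⟨0, 0, fun l _ => .inl (hN l)⟩

theorem isFreeSet_of_forall_eq_zero {n : ℕ} {x₀ : Fin n → ZMod 2}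
    {V : Submodule (ZMod 2) (Fin n → ZMod 2)} {X : Finset (Fin n)}
    (hX : X.card = finrank (ZMod 2) V) (hV : ∀ w ∈ V, (∀ k ∈ X, w k = 0) → w = 0) :
    IsFreeSet {x | x + x₀ ∈ V} X := by
  let π : (Fin n → ZMod 2) →ₗ[ZMod 2] ({i // i ∈ X} → ZMod 2) :=
    LinearMap.funLeft (ZMod 2) (ZMod 2) Subtype.val
  have hπ : ∀ w ∈ V, π w = 0 → w = 0 := fun w hw h0 =>
    hV w hw fun k hk => congrFun h0 ⟨k, hk⟩
  have hinj : Function.Injective (π.domRestrict V) := by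
    rw [← LinearMap.ker_eq_bot, LinearMap.ker_eq_bot']
    exact fun w hw => Subtype.ext (hπ w w.2 hw)
  have hsurj : Function.Surjective (π.domRestrict V) :=
    (LinearMap.injective_iff_surjective_of_finrank_eq_finrank (by simp [hX])).1 hinj
  refine ⟨fun _ _ => Set.mem_univ _, fun x hx y hy hxy => ?_, fun z _ => ?_⟩
  · have hdiff : x - y ∈ V := by simpa using V.sub_mem hx hy
    exact sub_eq_zero.1 (hπ _ hdiff (by rw [map_sub, sub_eq_zero]; exact hxy))
  · obtain ⟨v, hv⟩ := hsurj (z + π x₀)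
    refine ⟨v - x₀, by simp, ?_⟩
    change π (v - x₀) = z
    rw [map_sub]
    exact sub_eq_of_eq_add hv

def basisClass {K ι : Type*} [Field K] [DecidableEq ι] (V : Submodule K (ι → K)) (i : ι) :
    (ι → K) ⧸ V :=
  V.mkQ (Pi.single i 1)

theorem span_basisClass_compl_eq_top {K ι : Type*} [Field K] [Fintype ι] [DecidableEq ι]
    {V : Submodule K (ι → K)} {k : ι} {t : ι → K} (ht : t ∈ V) (htk : t k ≠ 0) :
    span K (basisClass V '' {k}ᶜ) = ⊤ := by
  refine eq_top_iff'.2 fun q => ?_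
  obtain ⟨x, rfl⟩ := V.mkQ_surjective q
  set y := x - (x k / t k) • t with hy
  have hyk : y k = 0 := by simp [hy, htk]
  have hxy : V.mkQ x = V.mkQ y := by
    rw [hy, map_sub, map_smul, (V.mkQ_apply t).trans ((Quotient.mk_eq_zero V).2 ht), smul_zero,
      sub_zero]
  rw [hxy, pi_eq_sum_univ' y, map_sum]
  refine sum_mem fun l _ => ?_
  rw [map_smul]
  by_cases hl : l = k
  · simp [hl, hyk]
  · exact smul_mem _ _ (subset_span ⟨l, hl, rfl⟩)

theorem basisClass_eq_zero_or_eq {ι : Type*} [DecidableEq ι]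
    {V : Submodule (ZMod 2) (ι → ZMod 2)} {i i' : ι} (hii' : i ≠ i') {w : ι → ZMod 2}
    (hw : w ∈ V) (hw0 : w ≠ 0) (hsupp : ∀ l, l ≠ i → l ≠ i' → w l = 0) :
    basisClass V i = 0 ∨ basisClass V i' = 0 ∨ basisClass V i = basisClass V i' := by
  have hw_eq : w = w i • Pi.single i 1 + w i' • Pi.single i' 1 := by
    funext l
    by_cases hl : l = i
    · subst hl; simp [hii']
    by_cases hl' : l = i'
    · subst hl'; simp [hl]
    · simp [hl, hl', hsupp l hl hl']
  have hsum : w i • basisClass V i + w i' • basisClass V i' = 0 := by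
    rw [basisClass, basisClass, ← map_smul, ← map_smul, ← map_add, ← hw_eq, mkQ_apply,
      Quotient.mk_eq_zero]
    exact hw
  have hZ2 : ∀ a : ZMod 2, a = 0 ∨ a = 1 := by decide
  rcases hZ2 (w i) with ha | ha <;> rcases hZ2 (w i') with hb | hb <;>
    simp only [ha, hb, zero_smul, one_smul, zero_add, add_zero] at hsum
  · exact absurd (by rw [hw_eq, ha, hb]; simp) hw0
  · exact .inr (.inl hsum)
  · exact .inl hsum
  · exact .inr (.inr (by rwa [← sub_eq_zero, ZModModule.sub_eq_add]))

theorem basisClass_eq_zero_or_eq_of_not_isFreeSet {x₀ : Fin 5 → ZMod 2}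
    {V : Submodule (ZMod 2) (Fin 5 → ZMod 2)} (hV : finrank (ZMod 2) V = 3) (j : Fin 5)
    (hj : ¬IsFreeSet {x | x + x₀ ∈ V} {j + 2, j + 3, j + 4}) :
    basisClass V j = 0 ∨ basisClass V (j + 1) = 0 ∨ basisClass V j = basisClass V (j + 1) := by
  obtain ⟨w, hwV, hwX, hw0⟩ :
      ∃ w ∈ V, (∀ k ∈ ({j + 2, j + 3, j + 4} : Finset (Fin 5)), w k = 0) ∧ w ≠ 0 := by
    by_contra! h
    have hcard : ∀ j : Fin 5, ({j + 2, j + 3, j + 4} : Finset (Fin 5)).card = 3 := by decide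
    exact hj (isFreeSet_of_forall_eq_zero (by rw [hV, hcard]) h)
  have hcover :
      ∀ j l : Fin 5, l ≠ j → l ≠ j + 1 → l ∈ ({j + 2, j + 3, j + 4} : Finset (Fin 5)) := by
    decide
  exact basisClass_eq_zero_or_eq (by simp) hwV hw0 fun l hl hl' => hwX l (hcover j l hl hl')

/-- indices `i, i+1, i+2` are taken cyclically (mod 5), which is
exactly addition in `Fin 5`. -/
theorem cyclically_consecutive_free_set
    (S : Set (Fin 5 → ZMod 2)) (hS : IsAffineSubspaceDim S 3)
    (hnc : ∀ i : Fin 5, ∃ u ∈ S, ∃ v ∈ S, u i ≠ v i) :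
    ∃ i : Fin 5, ({i, i + 1, i + 2} : Finset (Fin 5)).card = 3 ∧
      IsFreeSet S ({i, i + 1, i + 2} : Finset (Fin 5)) := by
  obtain ⟨x₀, V, hV, rfl⟩ := hS
  suffices ∃ i : Fin 5, IsFreeSet {x | x + x₀ ∈ V} {i, i + 1, i + 2} by
    have hcard : ∀ i : Fin 5, ({i, i + 1, i + 2} : Finset (Fin 5)).card = 3 := by decide
    obtain ⟨i, hi⟩ := this
    exact ⟨i, hcard i, hi⟩
  by_contra! hnot
  have hadj (j : Fin 5) := basisClass_eq_zero_or_eq_of_not_isFreeSet hV j (by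
    simpa [add_assoc] using hnot (j + 2))
  obtain ⟨k, v, hkv⟩ := Fin5.exists_forall_ne_eq_zero_or_eq _ hadj
  obtain ⟨u, hu, u', hu', hne⟩ := hnc k
  have hspan := span_basisClass_compl_eq_top (V := V) (by simpa using V.sub_mem hu hu')
    (sub_ne_zero.2 hne)
  have hle : finrank (ZMod 2) ((Fin 5 → ZMod 2) ⧸ V) ≤ 1 := by
    refine finrank_le_one v fun q => mem_span_singleton.1 ?_
    refine span_le.2 ?_ (hspan ▸ mem_top : q ∈ span (ZMod 2) (basisClass V '' {k}ᶜ))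
    rintro _ ⟨l, hl, rfl⟩
    rcases hkv l hl with h | h <;> simp [h, mem_span_singleton_self]
  have hQ := V.finrank_quotient_add_finrank
  simp only [hV, finrank_fin_fun] at hQ
  omega
end
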